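/- arXiv:2504.01077 — 4 statements merged into one kernel-verified Lean document; each statement's English description precedes it below -/
import Mathlib

section
/- Effective idempotence: let H be an n×n Hermitian complex matrix, ψ ∈ ℂ^n a unit vector, Ψ = ψψ†, and V_Ψ = ⟨ψ, H²ψ⟩ − ⟨ψ, Hψ⟩². Then the third power of the commutator [Ψ, H] = ΨH − HΨ satisfies ([Ψ,H])³ = −V_Ψ · [Ψ,H]. -/
open scoped InnerProductSpace
open Matrix

noncomputable section

/-- The action of a matrix on a vector in `EuclideanSpace ℂ (Fin n)`. -/
def matApp {n : ℕ} (M : Matrix (Fin n) (Fin n) ℂ) (v : EuclideanSpace ℂ (Fin n)) :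
    EuclideanSpace ℂ (Fin n) :=
  Matrix.toEuclideanLin M v

/-- The rank-one outer product `ψψ†`. -/
def outerProd {n : ℕ} (v : EuclideanSpace ℂ (Fin n)) : Matrix (Fin n) (Fin n) ℂ :=
  Matrix.of fun a b => v a * (starRingEnd ℂ) (v b)

/-- Energy mean `E_Ψ = ⟨ψ, Hψ⟩`. -/
def energyMean {n : ℕ} (H : Matrix (Fin n) (Fin n) ℂ) (v : EuclideanSpace ℂ (Fin n)) : ℝ :=
  (⟪v, matApp H v⟫_ℂ).re

/-- Energy variance `V_Ψ = ⟨ψ, H²ψ⟩ − E_Ψ²`. -/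
def energyVar {n : ℕ} (H : Matrix (Fin n) (Fin n) ℂ) (v : EuclideanSpace ℂ (Fin n)) : ℝ :=
  (⟪v, matApp (H * H) v⟫_ℂ).re - (energyMean H v) ^ 2


/-!
Write `x = Ψ H` and `y = H Ψ`. Idempotence of `Ψ` and the sandwich identity
`Ψ M Ψ = ⟨ψ, M ψ⟩ Ψ` give `x² = E x`, `y² = E y` and `x y = ⟨ψ, H² ψ⟩ Ψ`; in the expansion of
`(x - y)³` the two words `y x x` and `y y x` then cancel, leaving `(E² - ⟨ψ, H² ψ⟩) (x - y)`.
Hermiticity makes both expectations real, so this scalar is `-V_Ψ`.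
-/

section CommutatorCube

variable {K A : Type*} [CommRing K] [Ring A] [Algebra K A]

theorem commutator_pow_three_eq_smul {P h : A} {e s : K} (hP : IsIdempotentElem P)
    (he : P * h * P = e • P) (hs : P * (h * h) * P = s • P) :
    (P * h - h * P) ^ 3 = (e ^ 2 - s) • (P * h - h * P) := by
  set x := P * h with hx
  set y := h * P with hy
  have hPx : P * x = x := by rw [← mul_assoc, hP.eq]
  have hPy : P * y = e • P := by rw [← mul_assoc, he]
  have hxx : x * x = e • x := by
    rw [show x * x = P * h * P * h by rw [hx]; noncomm_ring, he, smul_mul_assoc]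
  have hyy : y * y = e • y := by
    rw [show y * y = h * (P * h * P) by rw [hy]; noncomm_ring, he, mul_smul_comm]
  have hxy : x * y = s • P := by rw [← hs, hx, hy]; noncomm_ring
  have hysP : y * (s • P) = s • y := by rw [mul_smul_comm, mul_assoc, hP.eq]
  calc (x - y) ^ 3
      = x * x * x - x * x * y - x * y * x + x * y * y
          - y * (x * x) + y * (x * y) + y * y * x - y * y * y := by noncomm_ring
    _ = (e ^ 2 - s) • (x - y) := by
      simp only [hxx, hyy, hxy, hysP, smul_mul_assoc, mul_smul_comm, hPx, hPy, smul_smul]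
      module

end CommutatorCube

section OuterProduct

variable {n : ℕ}

theorem outerProd_eq_vecMulVec (ψ : EuclideanSpace ℂ (Fin n)) :
    outerProd ψ = vecMulVec (WithLp.ofLp ψ) (star (WithLp.ofLp ψ)) := rfl

theorem inner_matApp_eq_dotProduct (M : Matrix (Fin n) (Fin n) ℂ)
    (ψ : EuclideanSpace ℂ (Fin n)) :
    ⟪ψ, matApp M ψ⟫_ℂ = star (WithLp.ofLp ψ) ⬝ᵥ M *ᵥ WithLp.ofLp ψ :=
  dotProduct_comm _ _

theorem outerProd_mul_mul_outerProd (ψ : EuclideanSpace ℂ (Fin n))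
    (M : Matrix (Fin n) (Fin n) ℂ) :
    outerProd ψ * M * outerProd ψ = ⟪ψ, matApp M ψ⟫_ℂ • outerProd ψ := by
  rw [outerProd_eq_vecMulVec, vecMulVec_mul, vecMulVec_mul_vecMulVec, vecMulVec_smul,
    ← dotProduct_mulVec, inner_matApp_eq_dotProduct]

theorem isIdempotentElem_outerProd {ψ : EuclideanSpace ℂ (Fin n)} (hψ : ‖ψ‖ = 1) :
    IsIdempotentElem (outerProd ψ) := by
  have h := outerProd_mul_mul_outerProd ψ 1
  have h1 : matApp 1 ψ = ψ := by simp [matApp]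
  rwa [mul_one, h1, inner_self_eq_norm_sq_to_K, hψ, RCLike.ofReal_one, one_pow, one_smul] at h

theorem ofReal_re_inner_matApp_self {M : Matrix (Fin n) (Fin n) ℂ} (hM : M.IsHermitian)
    (ψ : EuclideanSpace ℂ (Fin n)) :
    ((⟪ψ, matApp M ψ⟫_ℂ).re : ℂ) = ⟪ψ, matApp M ψ⟫_ℂ :=
  (isSymmetric_toEuclideanLin_iff.mpr hM).coe_re_inner_self_apply ψ

theorem ofReal_energyVar {H : Matrix (Fin n) (Fin n) ℂ} (hH : H.IsHermitian)
    (ψ : EuclideanSpace ℂ (Fin n)) :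
    (energyVar H ψ : ℂ) = ⟪ψ, matApp (H * H) ψ⟫_ℂ - ⟪ψ, matApp H ψ⟫_ℂ ^ 2 := by
  have hH2 : (H * H).IsHermitian := by simpa [hH.eq] using isHermitian_mul_conjTranspose_self H
  rw [energyVar, energyMean]
  push_cast
  rw [ofReal_re_inner_matApp_self hH, ofReal_re_inner_matApp_self hH2]

end OuterProduct

theorem effective_idempotence_general {n : ℕ}
    (H : Matrix (Fin n) (Fin n) ℂ) (hH : H.IsHermitian)
    (ψ : EuclideanSpace ℂ (Fin n)) (hψ : ‖ψ‖ = 1) :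
    (outerProd ψ * H - H * outerProd ψ) ^ 3
      = (-(energyVar H ψ) : ℂ) • (outerProd ψ * H - H * outerProd ψ) := by
  rw [commutator_pow_three_eq_smul (isIdempotentElem_outerProd hψ)
    (outerProd_mul_mul_outerProd ψ H) (outerProd_mul_mul_outerProd ψ (H * H)),
    ofReal_energyVar hH, neg_sub]

/-- Effective idempotence: for Hermitian `H` and unit `ψ`, with
`W = [ψψ†, H]`, one has `W³ = −V_Ψ · W`. -/
theorem effective_idempotence {n : ℕ} (hn : 1 ≤ n)
    (H : Matrix (Fin n) (Fin n) ℂ) (hH : H.IsHermitian)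
    (ψ : EuclideanSpace ℂ (Fin n)) (hψ : ‖ψ‖ = 1) :
    (outerProd ψ * H - H * outerProd ψ) ^ 3
      = (-(energyVar H ψ) : ℂ) • (outerProd ψ * H - H * outerProd ψ) :=
  effective_idempotence_general H hH ψ hψ
end
end

section
/- Unitary synthesis for linear polynomials with a real root: let H be an n×n Hermitian complex matrix, ψ ∈ ℂ^n a unit vector, Ψ = ψψ†, E_Ψ = ⟨ψ, Hψ⟩, and assume V_Ψ = ⟨ψ, H²ψ⟩ − E_Ψ² > 0. For any real α, set s_Ψ = −(1/√V_Ψ)·arccos( (E_Ψ − α) / √(V_Ψ + (E_Ψ − α)²) ). Then exp(s_Ψ·[Ψ,H]) ψ = (H − αI)ψ / ‖(H − αI)ψ‖; in particular (H − αI)ψ ≠ 0. -/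
open scoped InnerProductSpace
open Matrix

noncomputable section

/-!
Write `C = [Ψ, H]`. On the plane spanned by `ψ` and `Hψ`, `C` acts as an infinitesimal rotation:
`Cψ = E_Ψ ψ - Hψ` and `C²ψ = -V_Ψ ψ`. Hence `exp(sC)ψ = cos(s√V_Ψ) ψ + sin(s√V_Ψ)/√V_Ψ · Cψ`,
and the choice of `s_Ψ` makes `cos(s√V_Ψ) = (E_Ψ - α)/N` and `sin(s√V_Ψ) = -√V_Ψ/N`, where
`N² = V_Ψ + (E_Ψ - α)² = ‖(H - α)ψ‖²`; the two terms then combine to `(Hψ - αψ)/N`.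
-/

open NormedSpace InnerProductSpace

namespace Real

lemma cos_arccos_div_sqrt_add_sq {V : ℝ} (hV : 0 ≤ V) (c : ℝ) :
    cos (arccos (c / √(V + c ^ 2))) = c / √(V + c ^ 2) := by
  have h : |c / √(V + c ^ 2)| ≤ 1 := by
    rw [abs_div, abs_of_nonneg (sqrt_nonneg _)]
    exact div_le_one_of_le₀ (abs_le_sqrt (by linarith)) (sqrt_nonneg _)
  exact cos_arccos (abs_le.mp h).1 (abs_le.mp h).2

lemma sin_arccos_div_sqrt_add_sq {V : ℝ} (hV : 0 < V) (c : ℝ) :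
    sin (arccos (c / √(V + c ^ 2))) = √V / √(V + c ^ 2) := by
  have hN : 0 < V + c ^ 2 := by positivity
  rw [sin_arccos, div_pow, sq_sqrt hN.le, one_sub_div hN.ne', add_sub_cancel_right,
    sqrt_div' _ hN.le]

end Real

namespace ContinuousLinearMap

variable {𝕜 E : Type*} [NontriviallyNormedField 𝕜] [NormedAddCommGroup E] [NormedSpace 𝕜 E]
  {T : E →L[𝕜] E} {v : E}

lemma pow_two_mul_apply_of_apply_apply_eq_smul {c : 𝕜} (h : T (T v) = c • v) (k : ℕ) :
    (T ^ (2 * k)) v = c ^ k • v := by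
  induction k with
  | zero => simp
  | succ k ih =>
    rw [mul_add, mul_one, pow_add, mul_apply_eq_comp, sq, mul_apply_eq_comp, h, map_smul, ih,
      smul_smul, pow_succ']

lemma pow_two_mul_add_one_apply_of_apply_apply_eq_smul {c : 𝕜} (h : T (T v) = c • v) (k : ℕ) :
    (T ^ (2 * k + 1)) v = c ^ k • T v := by
  rw [pow_succ', mul_apply_eq_comp, pow_two_mul_apply_of_apply_apply_eq_smul h, map_smul]

theorem exp_smul_apply_of_apply_apply_eq_neg_sq [NormedSpace ℂ E] [CompleteSpace E]
    {T : E →L[ℂ] E} {ω : ℂ} (hω : ω ≠ 0) (h : T (T v) = (-ω ^ 2) • v) (s : ℂ) :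
    exp (s • T) v = Complex.cos (s * ω) • v + (Complex.sin (s * ω) / ω) • T v := by
  have hseries := (exp_series_hasSum_exp' (𝕂 := ℂ) (s • T)).mapL (apply ℂ E v)
  refine hseries.unique (HasSum.even_add_odd ?_ ?_)
  · convert (Complex.hasSum_cos (s * ω)).smul_const v using 2 with k
    rw [apply_apply, _root_.smul_apply, smul_pow, _root_.smul_apply,
      pow_two_mul_apply_of_apply_apply_eq_smul h, smul_smul, smul_smul, neg_pow, mul_pow, pow_mul]
    ring_nf
  · convert ((Complex.hasSum_sin (s * ω)).div_const ω).smul_const (T v) using 2 with k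
    rw [apply_apply, _root_.smul_apply, smul_pow, _root_.smul_apply,
      pow_two_mul_add_one_apply_of_apply_apply_eq_smul h, smul_smul, smul_smul]
    congr 1
    field_simp
    ring

end ContinuousLinearMap

namespace IsSelfAdjoint

variable {E : Type*} [NormedAddCommGroup E] [InnerProductSpace ℂ E] [CompleteSpace E]
  {T : E →L[ℂ] E} {ψ : E}

lemma inner_apply_left (hT : IsSelfAdjoint T) (x y : E) : ⟪T x, y⟫_ℂ = ⟪x, T y⟫_ℂ :=
  hT.isSymmetric x y

lemma lie_rankOne_apply (hT : IsSelfAdjoint T) (v : E) :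
    ⁅rankOne ℂ ψ ψ, T⁆ v = ⟪T ψ, v⟫_ℂ • ψ - ⟪ψ, v⟫_ℂ • T ψ := by
  rw [Ring.lie_def, _root_.sub_apply, mul_apply_eq_comp, mul_apply_eq_comp, rankOne_apply,
    rankOne_apply, map_smul, ← hT.inner_apply_left]

variable {μ V : ℝ}

lemma lie_rankOne_apply_self (hT : IsSelfAdjoint T) (hψ : ‖ψ‖ = 1) (hmean : ⟪ψ, T ψ⟫_ℂ = μ) :
    ⁅rankOne ℂ ψ ψ, T⁆ ψ = (μ : ℂ) • ψ - T ψ := by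
  rw [hT.lie_rankOne_apply, hT.inner_apply_left, hmean, inner_self_eq_norm_sq_to_K, hψ]
  simp

lemma lie_rankOne_apply_lie_rankOne_apply_self (hT : IsSelfAdjoint T) (hψ : ‖ψ‖ = 1)
    (hmean : ⟪ψ, T ψ⟫_ℂ = μ) (hvar : ‖T ψ‖ ^ 2 = V + μ ^ 2) :
    ⁅rankOne ℂ ψ ψ, T⁆ (⁅rankOne ℂ ψ ψ, T⁆ ψ) = (-V : ℂ) • ψ := by
  have hTT : ⟪T ψ, T ψ⟫_ℂ = V + μ ^ 2 := by
    rw [inner_self_eq_norm_sq_to_K, ← RCLike.ofReal_pow, hvar]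
    push_cast
    rfl
  rw [hT.lie_rankOne_apply_self hψ hmean, map_sub, map_smul, hT.lie_rankOne_apply_self hψ hmean,
    hT.lie_rankOne_apply, hTT, hmean]
  module

lemma norm_apply_sub_smul_sq (hT : IsSelfAdjoint T) (hψ : ‖ψ‖ = 1)
    (hmean : ⟪ψ, T ψ⟫_ℂ = μ) (hvar : ‖T ψ‖ ^ 2 = V + μ ^ 2) (α : ℝ) :
    ‖T ψ - (α : ℂ) • ψ‖ ^ 2 = V + (μ - α) ^ 2 := by
  rw [@norm_sub_sq ℂ, hvar, inner_smul_right, hT.inner_apply_left, hmean, norm_smul, hψ]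
  simp only [← Complex.ofReal_mul, RCLike.re_to_complex, Complex.ofReal_re, Complex.norm_real,
    Real.norm_eq_abs, mul_one, sq_abs]
  ring

theorem exp_smul_lie_rankOne_apply_self (hT : IsSelfAdjoint T) (hψ : ‖ψ‖ = 1)
    (hmean : ⟪ψ, T ψ⟫_ℂ = μ) (hvar : ‖T ψ‖ ^ 2 = V + μ ^ 2) (hV : 0 < V) (α : ℝ) :
    NormedSpace.exp (((-(1 / √V) * Real.arccos ((μ - α) / √(V + (μ - α) ^ 2)) : ℝ) : ℂ) •
        ⁅rankOne ℂ ψ ψ, T⁆) ψ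
      = (‖T ψ - (α : ℂ) • ψ‖ : ℂ)⁻¹ • (T ψ - (α : ℂ) • ψ) := by
  have hN : ‖T ψ - (α : ℂ) • ψ‖ = √(V + (μ - α) ^ 2) := by
    rw [← Real.sqrt_sq (norm_nonneg (T ψ - _)), hT.norm_apply_sub_smul_sq hψ hmean hvar]
  have hNpos : 0 < √(V + (μ - α) ^ 2) := Real.sqrt_pos.2 (by positivity)
  have hsqrtV : 0 < √V := Real.sqrt_pos.2 hV
  have hsq : ⁅rankOne ℂ ψ ψ, T⁆ (⁅rankOne ℂ ψ ψ, T⁆ ψ) = (-((√V : ℝ) : ℂ) ^ 2) • ψ := by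
    rw [hT.lie_rankOne_apply_lie_rankOne_apply_self hψ hmean hvar, ← Complex.ofReal_pow,
      Real.sq_sqrt hV.le]
  have hangle (θ : ℝ) : ((-(1 / √V) * θ : ℝ) : ℂ) * ((√V : ℝ) : ℂ) = ((-θ : ℝ) : ℂ) := by
    rw [← Complex.ofReal_mul]
    field_simp
  rw [ContinuousLinearMap.exp_smul_apply_of_apply_apply_eq_neg_sq (by exact_mod_cast hsqrtV.ne')
    hsq, hangle, ← Complex.ofReal_cos, ← Complex.ofReal_sin, Real.cos_neg, Real.sin_neg,
    Real.cos_arccos_div_sqrt_add_sq hV.le, Real.sin_arccos_div_sqrt_add_sq hV,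
    hT.lie_rankOne_apply_self hψ hmean, hN]
  have : ((√(V + (μ - α) ^ 2) : ℝ) : ℂ) ≠ 0 := by exact_mod_cast hNpos.ne'
  have : ((√V : ℝ) : ℂ) ≠ 0 := by exact_mod_cast hsqrtV.ne'
  push_cast
  match_scalars
  · field_simp
    ring
  · field_simp

end IsSelfAdjoint

namespace Matrix

open scoped Norms.Operator in
theorem toEuclideanCLM_exp {m 𝕜 : Type*} [Fintype m] [DecidableEq m] [RCLike 𝕜]
    (M : Matrix m m 𝕜) :
    toEuclideanCLM (n := m) (𝕜 := 𝕜) (exp M) = exp (toEuclideanCLM (n := m) (𝕜 := 𝕜) M) :=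
  map_exp (toEuclideanCLM (n := m) (𝕜 := 𝕜)) (LinearMap.continuous_of_finiteDimensional
    (toEuclideanCLM (n := m) (𝕜 := 𝕜)).toAlgEquiv.toLinearMap) M

end Matrix

variable {n : ℕ}

lemma matApp_eq_toEuclideanCLM_apply (M : Matrix (Fin n) (Fin n) ℂ)
    (v : EuclideanSpace ℂ (Fin n)) :
    matApp M v = toEuclideanCLM (n := Fin n) (𝕜 := ℂ) M v :=
  rfl

lemma toEuclideanCLM_outerProd (ψ : EuclideanSpace ℂ (Fin n)) :
    toEuclideanCLM (n := Fin n) (𝕜 := ℂ) (outerProd ψ) = rankOne ℂ ψ ψ := by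
  ext v a
  simp only [outerProd, ofLp_toEuclideanCLM, mulVec, dotProduct, of_apply, rankOne_apply,
    PiLp.inner_apply, RCLike.inner_apply, PiLp.smul_apply, smul_eq_mul, Finset.sum_mul]
  exact Finset.sum_congr rfl fun _ _ => by ring

lemma Matrix.IsHermitian.isSelfAdjoint_toEuclideanCLM {H : Matrix (Fin n) (Fin n) ℂ}
    (hH : H.IsHermitian) : IsSelfAdjoint (toEuclideanCLM (n := Fin n) (𝕜 := ℂ) H) :=
  hH.isSelfAdjoint.map _

lemma inner_toEuclideanCLM_self_eq_energyMean {H : Matrix (Fin n) (Fin n) ℂ}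
    (hH : H.IsHermitian) (ψ : EuclideanSpace ℂ (Fin n)) :
    ⟪ψ, toEuclideanCLM (n := Fin n) (𝕜 := ℂ) H ψ⟫_ℂ = energyMean H ψ := by
  refine (Complex.conj_eq_iff_re.mp ?_).symm
  rw [inner_conj_symm]
  exact hH.isSelfAdjoint_toEuclideanCLM.inner_apply_left ψ ψ

lemma norm_toEuclideanCLM_apply_sq {H : Matrix (Fin n) (Fin n) ℂ} (hH : H.IsHermitian)
    (ψ : EuclideanSpace ℂ (Fin n)) :
    ‖toEuclideanCLM (n := Fin n) (𝕜 := ℂ) H ψ‖ ^ 2 = energyVar H ψ + energyMean H ψ ^ 2 := by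
  rw [energyVar, matApp_eq_toEuclideanCLM_apply (H * H), map_mul, mul_apply_eq_comp,
    ← hH.isSelfAdjoint_toEuclideanCLM.inner_apply_left, @norm_sq_eq_re_inner ℂ,
    RCLike.re_to_complex]
  ring

theorem unitary_synthesis_linear_real_root_general {n : ℕ}
    (H : Matrix (Fin n) (Fin n) ℂ) (hH : H.IsHermitian)
    (ψ : EuclideanSpace ℂ (Fin n)) (hψ : ‖ψ‖ = 1)
    (hV : 0 < energyVar H ψ) (α : ℝ) :
    matApp (H - (α : ℂ) • 1) ψ ≠ 0 ∧
    matApp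
        (NormedSpace.exp
          (((-(1 / Real.sqrt (energyVar H ψ))
              * Real.arccos ((energyMean H ψ - α)
                  / Real.sqrt (energyVar H ψ + (energyMean H ψ - α) ^ 2)) : ℝ) : ℂ)
            • (outerProd ψ * H - H * outerProd ψ))) ψ
      = (‖matApp (H - (α : ℂ) • 1) ψ‖ : ℂ)⁻¹ • matApp (H - (α : ℂ) • 1) ψ := by
  have hT := hH.isSelfAdjoint_toEuclideanCLM
  have hmean := inner_toEuclideanCLM_self_eq_energyMean hH ψ
  have hvar := norm_toEuclideanCLM_apply_sq hH ψ
  simp only [matApp_eq_toEuclideanCLM_apply, map_sub, map_smul, map_one, _root_.sub_apply,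
    _root_.smul_apply, one_apply_eq_self]
  constructor
  · have hnorm : 0 < ‖toEuclideanCLM (n := Fin n) (𝕜 := ℂ) H ψ - (α : ℂ) • ψ‖ ^ 2 := by
      rw [hT.norm_apply_sub_smul_sq hψ hmean hvar α]
      positivity
    exact norm_ne_zero_iff.mp (pow_ne_zero_iff two_ne_zero |>.mp hnorm.ne')
  · rw [toEuclideanCLM_exp, map_smul, map_sub, map_mul, map_mul, ← Ring.lie_def,
      toEuclideanCLM_outerProd]
    exact hT.exp_smul_lie_rankOne_apply_self hψ hmean hvar hV α

/-- Unitary synthesis for linear polynomials with a real root: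
for Hermitian `H`, unit `ψ` with `V_Ψ > 0`, and any real `α`, setting
`s_Ψ = −(1/√V_Ψ)·arccos((E_Ψ − α)/√(V_Ψ + (E_Ψ − α)²))`,
one has `(H − αI)ψ ≠ 0` and `exp(s_Ψ·[Ψ,H]) ψ = (H − αI)ψ / ‖(H − αI)ψ‖`. -/
theorem unitary_synthesis_linear_real_root {n : ℕ} (hn : 1 ≤ n)
    (H : Matrix (Fin n) (Fin n) ℂ) (hH : H.IsHermitian)
    (ψ : EuclideanSpace ℂ (Fin n)) (hψ : ‖ψ‖ = 1)
    (hV : 0 < energyVar H ψ) (α : ℝ) :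
    matApp (H - (α : ℂ) • 1) ψ ≠ 0 ∧
    matApp
        (NormedSpace.exp
          (((-(1 / Real.sqrt (energyVar H ψ))
              * Real.arccos ((energyMean H ψ - α)
                  / Real.sqrt (energyVar H ψ + (energyMean H ψ - α) ^ 2)) : ℝ) : ℂ)
            • (outerProd ψ * H - H * outerProd ψ))) ψ
      = (‖matApp (H - (α : ℂ) • 1) ψ‖ : ℂ)⁻¹ • matApp (H - (α : ℂ) • 1) ψ :=
  unitary_synthesis_linear_real_root_general H hH ψ hψ hV α
end
end

section
/- Unitary synthesis for arbitrary real linear combinations: let H be an n×n Hermitian complex matrix, ψ ∈ ℂ^n a unit vector, Ψ = ψψ†, E_Ψ = ⟨ψ, Hψ⟩, and assume V_Ψ = ⟨ψ, H²ψ⟩ − E_Ψ² > 0. Let x, y ∈ ℝ with y ≠ 0 or x > 0, and note (xI + yH)ψ ≠ 0. Set s_Ψ = −(sgn(y)/√V_Ψ)·arccos( (x + y·E_Ψ) / ‖(xI + yH)ψ‖ ). Then exp(s_Ψ·[Ψ,H]) ψ = (xI + yH)ψ / ‖(xI + yH)ψ‖. -/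
open scoped InnerProductSpace
open Matrix

noncomputable section

/-!
Put `E = E_Ψ`, `V = V_Ψ` and `φ = (Hψ - E ψ) / √V`. Then `ψ, φ` are orthonormal and the generator
`[Ψ, H]` maps `ψ ↦ -√V φ` and `φ ↦ √V ψ`, so `exp(s [Ψ, H]) ψ = cos(s√V) ψ - sin(s√V) φ` is a
rotation in the plane of `ψ` and `φ`. That plane contains `(xI + yH)ψ = (x + yE) ψ + y√V φ`, and
`s_Ψ √V = -sgn(y) arccos(…)` is minus the polar angle of this vector in the basis `ψ, φ`.
-/

namespace Real

theorem sign_mul_abs (b : ℝ) : sign b * |b| = b := by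
  rcases lt_trichotomy b 0 with h | rfl | h
  · simp [sign_of_neg h, abs_of_neg h]
  · simp
  · simp [sign_of_pos h, abs_of_pos h]

theorem sign_mul_of_pos (b : ℝ) {c : ℝ} (hc : 0 < c) : sign (b * c) = sign b := by
  rcases lt_trichotomy b 0 with h | rfl | h
  · rw [sign_of_neg h, sign_of_neg (mul_neg_of_neg_of_pos h hc)]
  · simp
  · rw [sign_of_pos h, sign_of_pos (mul_pos h hc)]

theorem sin_sign_mul (b θ : ℝ) : sin (sign b * θ) = sign b * sin θ := by
  rcases sign_apply_eq b with h | h | h <;> simp [h]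

theorem cos_sign_mul {b : ℝ} (hb : b ≠ 0) (θ : ℝ) : cos (sign b * θ) = cos θ := by
  rcases sign_apply_eq_of_ne_zero b hb with h | h <;> simp [h]

variable {a b r : ℝ}

theorem sq_add_sq_pos_of_ne_zero_or_pos (hab : b ≠ 0 ∨ 0 < a) : 0 < a ^ 2 + b ^ 2 := by
  rcases hab with hb | ha
  · exact add_pos_of_nonneg_of_pos (sq_nonneg a) (pow_two_pos_of_ne_zero hb)
  · exact add_pos_of_pos_of_nonneg (pow_pos ha 2) (sq_nonneg b)

theorem sin_sign_mul_arccos_div (hr : 0 < r) (h : a ^ 2 + b ^ 2 = r ^ 2) :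
    sin (sign b * arccos (a / r)) = b / r := by
  have hsq : 1 - (a / r) ^ 2 = (|b| / r) ^ 2 := by
    field_simp
    rw [sq_abs]
    linarith
  rw [sin_sign_mul, sin_arccos, hsq, sqrt_sq (by positivity), ← mul_div_assoc, sign_mul_abs]

theorem cos_sign_mul_arccos_div (hr : 0 < r) (h : a ^ 2 + b ^ 2 = r ^ 2)
    (hab : b ≠ 0 ∨ 0 < a) : cos (sign b * arccos (a / r)) = a / r := by
  by_cases hb : b = 0
  · have ha : a = r := by
      subst hb
      exact (pow_left_inj₀ (hab.resolve_left (not_not.2 rfl)).le hr.le two_ne_zero).1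
        (by simpa using h)
    simp [hb, ha, hr.ne']
  · have hle : |a / r| ≤ 1 := by
      rw [abs_div, abs_of_pos hr, div_le_one hr]
      exact abs_le_of_sq_le_sq (by nlinarith) hr.le
    rw [cos_sign_mul hb, cos_arccos (abs_le.1 hle).1 (abs_le.1 hle).2]

end Real

theorem norm_ofReal_smul_add_ofReal_smul_sq {E : Type*} [NormedAddCommGroup E]
    [InnerProductSpace ℂ E] {u w : E} (hu : ‖u‖ = 1) (hw : ‖w‖ = 1) (huw : ⟪u, w⟫_ℂ = 0)
    (a b : ℝ) : ‖(a : ℂ) • u + (b : ℂ) • w‖ ^ 2 = a ^ 2 + b ^ 2 := by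
  rw [sq, norm_add_sq_eq_norm_sq_add_norm_sq_of_inner_eq_zero _ _
    (by rw [inner_smul_left, inner_smul_right, huw, mul_zero, mul_zero])]
  simp [norm_smul, hu, hw, sq]

open NormedSpace

namespace ContinuousLinearMap

section RCLike

variable {𝕜 E : Type*} [RCLike 𝕜] [NormedAddCommGroup E] [NormedSpace 𝕜 E]

theorem pow_apply_of_apply_eq_smul {T : E →L[𝕜] E} {μ : 𝕜} {u : E} (h : T u = μ • u) (k : ℕ) :
    (T ^ k) u = μ ^ k • u := by
  induction k with
  | zero => simp
  | succ k ih => rw [pow_succ', mul_apply_eq_comp, ih, map_smul, h, smul_smul, pow_succ]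

theorem exp_apply_of_apply_eq_smul [CompleteSpace E] {T : E →L[𝕜] E} {μ : 𝕜} {u : E}
    (h : T u = μ • u) : exp T u = exp μ • u := by
  have hT := (apply 𝕜 E u).map_tsum (expSeries_summable' (𝕂 := 𝕜) T)
  simp only [apply_apply] at hT
  rw [exp_eq_tsum 𝕜, exp_eq_tsum 𝕜, hT, ← (expSeries_summable' (𝕂 := 𝕜) μ).tsum_smul_const]
  simp_rw [_root_.smul_apply, pow_apply_of_apply_eq_smul h, smul_smul, smul_eq_mul]

end RCLike

open Complex in
/-- The vectors `u ± i w` are eigenvectors of `T` for the eigenvalues `± i a`. -/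
theorem exp_apply_of_rotation {E : Type*} [NormedAddCommGroup E] [NormedSpace ℂ E]
    [CompleteSpace E] {T : E →L[ℂ] E} {a : ℂ} {u w : E} (hu : T u = -a • w) (hw : T w = a • u) :
    exp T u = cos a • u - sin a • w := by
  have hplus : T (u + I • w) = (a * I) • (u + I • w) := by
    rw [map_add, map_smul, hu, hw]
    match_scalars
    · linear_combination -a * I_sq
    · ring
  have hminus : T (u - I • w) = (-a * I) • (u - I • w) := by
    rw [map_sub, map_smul, hu, hw]
    match_scalars
    · linear_combination -a * I_sq
    · ring
  have hu_eq : u = (2⁻¹ : ℂ) • ((u + I • w) + (u - I • w)) := by module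
  rw [hu_eq, map_smul, map_add, exp_apply_of_apply_eq_smul hplus,
    exp_apply_of_apply_eq_smul hminus, ← exp_eq_exp_ℂ, cos, sin]
  match_scalars <;> ring

end ContinuousLinearMap

section matApp

variable {n : ℕ}

theorem matApp_eq_toEuclideanCLM (M : Matrix (Fin n) (Fin n) ℂ) (v : EuclideanSpace ℂ (Fin n)) :
    matApp M v = toEuclideanCLM (𝕜 := ℂ) M v := rfl

@[simp]
theorem matApp_add (M N : Matrix (Fin n) (Fin n) ℂ) (v : EuclideanSpace ℂ (Fin n)) :
    matApp (M + N) v = matApp M v + matApp N v := by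
  simp [matApp_eq_toEuclideanCLM]

@[simp]
theorem matApp_sub (M N : Matrix (Fin n) (Fin n) ℂ) (v : EuclideanSpace ℂ (Fin n)) :
    matApp (M - N) v = matApp M v - matApp N v := by
  simp [matApp_eq_toEuclideanCLM]

@[simp]
theorem matApp_smul (c : ℂ) (M : Matrix (Fin n) (Fin n) ℂ) (v : EuclideanSpace ℂ (Fin n)) :
    matApp (c • M) v = c • matApp M v := by
  simp [matApp_eq_toEuclideanCLM]

@[simp]
theorem matApp_one (v : EuclideanSpace ℂ (Fin n)) : matApp 1 v = v := by
  simp [matApp_eq_toEuclideanCLM]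

@[simp]
theorem matApp_mul (M N : Matrix (Fin n) (Fin n) ℂ) (v : EuclideanSpace ℂ (Fin n)) :
    matApp (M * N) v = matApp M (matApp N v) := by
  simp [matApp_eq_toEuclideanCLM]

@[simp]
theorem matApp_smul_right (M : Matrix (Fin n) (Fin n) ℂ) (c : ℂ) (v : EuclideanSpace ℂ (Fin n)) :
    matApp M (c • v) = c • matApp M v := by
  simp [matApp_eq_toEuclideanCLM]

theorem matApp_outerProd (v χ : EuclideanSpace ℂ (Fin n)) :
    matApp (outerProd v) χ = ⟪v, χ⟫_ℂ • v := by
  ext a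
  simp only [matApp_eq_toEuclideanCLM, ofLp_toEuclideanCLM, outerProd, mulVec, dotProduct,
    of_apply, PiLp.smul_apply, PiLp.inner_apply, RCLike.inner_apply, smul_eq_mul, Finset.sum_mul]
  exact Finset.sum_congr rfl fun b _ => by ring

theorem matApp_commutator_outerProd (H : Matrix (Fin n) (Fin n) ℂ)
    (ψ χ : EuclideanSpace ℂ (Fin n)) :
    matApp (outerProd ψ * H - H * outerProd ψ) χ =
      ⟪ψ, matApp H χ⟫_ℂ • ψ - ⟪ψ, χ⟫_ℂ • matApp H ψ := by
  simp [matApp_outerProd]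

theorem matApp_exp (M : Matrix (Fin n) (Fin n) ℂ) (v : EuclideanSpace ℂ (Fin n)) :
    matApp (exp M) v = exp (toEuclideanCLM (𝕜 := ℂ) M) v := by
  -- `exp` does not depend on the norm; any algebra norm makes `map_exp` applicable.
  let : NormedRing (Matrix (Fin n) (Fin n) ℂ) := Matrix.linftyOpNormedRing
  let : NormedAlgebra ℂ (Matrix (Fin n) (Fin n) ℂ) := Matrix.linftyOpNormedAlgebra
  let : NormedAlgebra ℚ (Matrix (Fin n) (Fin n) ℂ) := NormedAlgebra.restrictScalars ℚ ℂ _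
  have hcont : Continuous (toEuclideanCLM (n := Fin n) (𝕜 := ℂ)) :=
    (toEuclideanCLM (n := Fin n) (𝕜 := ℂ)).toAlgEquiv.toLinearEquiv.toLinearMap
      |>.continuous_of_finiteDimensional
  exact congr($(map_exp _ hcont M) v)

end matApp

section Energy

variable {n : ℕ} {H : Matrix (Fin n) (Fin n) ℂ} {ψ : EuclideanSpace ℂ (Fin n)}

theorem Matrix.IsHermitian.inner_matApp_left (hH : H.IsHermitian)
    (u w : EuclideanSpace ℂ (Fin n)) :
    ⟪matApp H u, w⟫_ℂ = ⟪u, matApp H w⟫_ℂ :=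
  isSymmetric_toEuclideanLin_iff.mpr hH u w

theorem inner_matApp_self_eq_energyMean (hH : H.IsHermitian) (ψ : EuclideanSpace ℂ (Fin n)) :
    ⟪ψ, matApp H ψ⟫_ℂ = energyMean H ψ :=
  ((isSymmetric_toEuclideanLin_iff.mpr hH).coe_re_inner_self_apply ψ).symm

theorem energyVar_eq_norm_sq_sub (hH : H.IsHermitian) (ψ : EuclideanSpace ℂ (Fin n)) :
    energyVar H ψ = ‖matApp H ψ‖ ^ 2 - energyMean H ψ ^ 2 := by
  rw [energyVar, matApp_mul, ← hH.inner_matApp_left, ← inner_self_eq_norm_sq (𝕜 := ℂ)]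
  rfl

def normalizedDeviation (H : Matrix (Fin n) (Fin n) ℂ) (ψ : EuclideanSpace ℂ (Fin n)) :
    EuclideanSpace ℂ (Fin n) :=
  ((√(energyVar H ψ) : ℝ) : ℂ)⁻¹ • (matApp H ψ - (energyMean H ψ : ℂ) • ψ)

theorem matApp_eq_energyMean_smul_add (hV : 0 < energyVar H ψ) :
    matApp H ψ =
      (energyMean H ψ : ℂ) • ψ + ((√(energyVar H ψ) : ℝ) : ℂ) • normalizedDeviation H ψ := by
  have hv : ((√(energyVar H ψ) : ℝ) : ℂ) ≠ 0 := by exact_mod_cast (Real.sqrt_pos.2 hV).ne'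
  rw [normalizedDeviation, smul_smul, mul_inv_cancel₀ hv, one_smul, add_sub_cancel]

theorem inner_normalizedDeviation (hH : H.IsHermitian) (hψ : ‖ψ‖ = 1) :
    ⟪ψ, normalizedDeviation H ψ⟫_ℂ = 0 := by
  rw [normalizedDeviation, inner_smul_right, inner_sub_right, inner_smul_right,
    inner_matApp_self_eq_energyMean hH, inner_self_eq_one_of_norm_eq_one hψ, mul_one, sub_self,
    mul_zero]

theorem norm_normalizedDeviation (hH : H.IsHermitian) (hψ : ‖ψ‖ = 1) (hV : 0 < energyVar H ψ) :
    ‖normalizedDeviation H ψ‖ = 1 := by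
  have hpyth := norm_add_sq_eq_norm_sq_add_norm_sq_of_inner_eq_zero
    ((energyMean H ψ : ℂ) • ψ) (((√(energyVar H ψ) : ℝ) : ℂ) • normalizedDeviation H ψ)
    (by rw [inner_smul_left, inner_smul_right, inner_normalizedDeviation hH hψ, mul_zero, mul_zero])
  rw [← matApp_eq_energyMean_smul_add hV, norm_smul, norm_smul, hψ, Complex.norm_real,
    Complex.norm_real, Real.norm_of_nonneg (Real.sqrt_nonneg _), mul_one, Real.norm_eq_abs,
    abs_mul_abs_self] at hpyth
  have hsq : energyVar H ψ * (‖normalizedDeviation H ψ‖ ^ 2 - 1) = 0 := by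
    linear_combination -hpyth - energyVar_eq_norm_sq_sub hH ψ -
      ‖normalizedDeviation H ψ‖ ^ 2 * Real.mul_self_sqrt hV.le
  rw [mul_eq_zero, sub_eq_zero] at hsq
  exact (pow_eq_one_iff_of_nonneg (norm_nonneg _) two_ne_zero).1 (hsq.resolve_left hV.ne')

theorem matApp_commutator_self (hH : H.IsHermitian) (hψ : ‖ψ‖ = 1) (hV : 0 < energyVar H ψ) :
    matApp (outerProd ψ * H - H * outerProd ψ) ψ =
      -((√(energyVar H ψ) : ℝ) : ℂ) • normalizedDeviation H ψ := by
  rw [matApp_commutator_outerProd, inner_matApp_self_eq_energyMean hH,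
    inner_self_eq_one_of_norm_eq_one hψ, one_smul, matApp_eq_energyMean_smul_add hV]
  module

theorem matApp_commutator_normalizedDeviation (hH : H.IsHermitian) (hψ : ‖ψ‖ = 1)
    (hV : 0 < energyVar H ψ) :
    matApp (outerProd ψ * H - H * outerProd ψ) (normalizedDeviation H ψ) =
      ((√(energyVar H ψ) : ℝ) : ℂ) • ψ := by
  rw [matApp_commutator_outerProd, ← hH.inner_matApp_left, matApp_eq_energyMean_smul_add hV,
    inner_add_left, inner_smul_left, inner_smul_left, inner_normalizedDeviation hH hψ,
    inner_self_eq_one_of_norm_eq_one (norm_normalizedDeviation hH hψ hV)]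
  simp

theorem matApp_exp_smul_commutator (hH : H.IsHermitian) (hψ : ‖ψ‖ = 1) (hV : 0 < energyVar H ψ)
    (s : ℝ) :
    matApp (exp ((s : ℂ) • (outerProd ψ * H - H * outerProd ψ))) ψ =
      (Real.cos (s * √(energyVar H ψ)) : ℂ) • ψ -
        (Real.sin (s * √(energyVar H ψ)) : ℂ) • normalizedDeviation H ψ := by
  rw [matApp_exp, ContinuousLinearMap.exp_apply_of_rotation (a := s * √(energyVar H ψ))]
  · push_cast; rfl
  · rw [map_smul, _root_.smul_apply, ← matApp_eq_toEuclideanCLM, matApp_commutator_self hH hψ hV]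
    module
  · rw [map_smul, _root_.smul_apply, ← matApp_eq_toEuclideanCLM,
      matApp_commutator_normalizedDeviation hH hψ hV]
    module

theorem matApp_linearCombination (hV : 0 < energyVar H ψ) (x y : ℝ) :
    matApp ((x : ℂ) • 1 + (y : ℂ) • H) ψ =
      ((x + y * energyMean H ψ : ℝ) : ℂ) • ψ +
        ((y * √(energyVar H ψ) : ℝ) : ℂ) • normalizedDeviation H ψ := by
  simp only [matApp_add, matApp_smul, matApp_one, matApp_eq_energyMean_smul_add hV]
  push_cast
  module

theorem norm_matApp_linearCombination_sq (hH : H.IsHermitian) (hψ : ‖ψ‖ = 1)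
    (hV : 0 < energyVar H ψ) (x y : ℝ) :
    ‖matApp ((x : ℂ) • 1 + (y : ℂ) • H) ψ‖ ^ 2 =
      (x + y * energyMean H ψ) ^ 2 + (y * √(energyVar H ψ)) ^ 2 := by
  rw [matApp_linearCombination hV, norm_ofReal_smul_add_ofReal_smul_sq hψ
    (norm_normalizedDeviation hH hψ hV) (inner_normalizedDeviation hH hψ)]

end Energy

theorem unitary_synthesis_linear_combination_general {n : ℕ}
    (H : Matrix (Fin n) (Fin n) ℂ) (hH : H.IsHermitian)
    (ψ : EuclideanSpace ℂ (Fin n)) (hψ : ‖ψ‖ = 1)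
    (hV : 0 < energyVar H ψ) (x y : ℝ) (hxy : y ≠ 0 ∨ 0 < x) :
    matApp ((x : ℂ) • 1 + (y : ℂ) • H) ψ ≠ 0 ∧
    matApp
        (NormedSpace.exp
          (((-(Real.sign y / Real.sqrt (energyVar H ψ))
              * Real.arccos ((x + y * energyMean H ψ)
                  / ‖matApp ((x : ℂ) • 1 + (y : ℂ) • H) ψ‖) : ℝ) : ℂ)
            • (outerProd ψ * H - H * outerProd ψ))) ψ
      = (‖matApp ((x : ℂ) • 1 + (y : ℂ) • H) ψ‖ : ℂ)⁻¹
          • matApp ((x : ℂ) • 1 + (y : ℂ) • H) ψ := by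
  have hw := matApp_linearCombination hV x y
  set a := x + y * energyMean H ψ
  set v := √(energyVar H ψ)
  set w := matApp ((x : ℂ) • 1 + (y : ℂ) • H) ψ
  have hv : 0 < v := Real.sqrt_pos.2 hV
  have hnorm : a ^ 2 + (y * v) ^ 2 = ‖w‖ ^ 2 :=
    (norm_matApp_linearCombination_sq hH hψ hV x y).symm
  have hab : y * v ≠ 0 ∨ 0 < a := by
    rcases eq_or_ne y 0 with rfl | hy
    · simpa [a] using hxy
    · exact .inl (mul_ne_zero hy hv.ne')
  have hw0 : w ≠ 0 :=
    norm_ne_zero_iff.1 (sq_pos_iff.1 (hnorm ▸ Real.sq_add_sq_pos_of_ne_zero_or_pos hab))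
  have hr : 0 < ‖w‖ := norm_pos_iff.2 hw0
  refine ⟨hw0, ?_⟩
  have hangle : -(Real.sign y / v) * Real.arccos (a / ‖w‖) * v =
      -(Real.sign (y * v) * Real.arccos (a / ‖w‖)) := by
    rw [Real.sign_mul_of_pos y hv]
    field_simp
  rw [matApp_exp_smul_commutator hH hψ hV, hangle, Real.cos_neg, Real.sin_neg,
    Real.cos_sign_mul_arccos_div hr hnorm hab, Real.sin_sign_mul_arccos_div hr hnorm, hw]
  push_cast
  module

/-- Unitary synthesis for arbitrary real linear combinations:
for Hermitian `H`, unit `ψ` with `V_Ψ > 0`, and reals `x, y` with `y ≠ 0` or `x > 0`,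
one has `(xI + yH)ψ ≠ 0`, and with
`s_Ψ = −(sgn(y)/√V_Ψ)·arccos((x + y·E_Ψ)/‖(xI + yH)ψ‖)`,
`exp(s_Ψ·[Ψ,H]) ψ = (xI + yH)ψ / ‖(xI + yH)ψ‖`. -/
theorem unitary_synthesis_linear_combination {n : ℕ} (hn : 1 ≤ n)
    (H : Matrix (Fin n) (Fin n) ℂ) (hH : H.IsHermitian)
    (ψ : EuclideanSpace ℂ (Fin n)) (hψ : ‖ψ‖ = 1)
    (hV : 0 < energyVar H ψ) (x y : ℝ) (hxy : y ≠ 0 ∨ 0 < x) :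
    matApp ((x : ℂ) • 1 + (y : ℂ) • H) ψ ≠ 0 ∧
    matApp
        (NormedSpace.exp
          (((-(Real.sign y / Real.sqrt (energyVar H ψ))
              * Real.arccos ((x + y * energyMean H ψ)
                  / ‖matApp ((x : ℂ) • 1 + (y : ℂ) • H) ψ‖) : ℝ) : ℂ)
            • (outerProd ψ * H - H * outerProd ψ))) ψ
      = (‖matApp ((x : ℂ) • 1 + (y : ℂ) • H) ψ‖ : ℂ)⁻¹
          • matApp ((x : ℂ) • 1 + (y : ℂ) • H) ψ :=
  unitary_synthesis_linear_combination_general H hH ψ hψ hV x y hxy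
end
end

section
/- Monotonicity and bound for the DB-QSP step duration: fix a real c > 0 (playing the role of |E_Ψ − z|) and define f : (0,∞) → ℝ by f(V) = (1/√V)·arccos( c / √(V + c²) ). Then f is monotone non-increasing on (0,∞), and f(V) ≤ 1/c for all V > 0. -/
/-!
With `x = √V / c`, the step duration is `(arctan x / x) / c`, because
`c / √(V + c²) = cos (arctan x)`.
Since `arctan` is concave on `[0, ∞)` and vanishes at `0`, its secant slope `arctan x / x`
from the origin decreases in `x`, and it is at most `1` because `arctan x ≤ x`
(equivalently `x ≤ tan x`).
-/

open Real Set

theorem Real.concaveOn_arctan_Ici : ConcaveOn ℝ (Ici 0) arctan := by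
  refine AntitoneOn.concaveOn_of_deriv (convex_Ici 0) continuous_arctan.continuousOn
    differentiable_arctan.differentiableOn ?_
  rw [interior_Ici, deriv_arctan]
  intro x hx y hy hxy
  have hx : 0 < x := hx
  dsimp only
  gcongr

theorem Real.antitoneOn_arctan_div_self : AntitoneOn (fun x => arctan x / x) (Ioi 0) := by
  have hslope : slope arctan 0 = fun x => arctan x / x := by
    ext x
    simp [slope_def_field]
  have hdom : {y | y ∈ Ici (0 : ℝ) ∧ 0 < y} = Ioi 0 := by
    ext y
    simpa using le_of_lt
  simpa only [hslope, hdom] using concaveOn_arctan_Ici.antitoneOn_slope_gt self_mem_Ici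

theorem Real.arctan_le_self {x : ℝ} (hx : 0 ≤ x) : arctan x ≤ x := by
  simpa using le_tan (arctan_nonneg.mpr hx) (arctan_lt_pi_div_two x)

theorem Real.arccos_div_sqrt_add_sq {c V : ℝ} (hc : 0 < c) (hV : 0 ≤ V) :
    arccos (c / √(V + c ^ 2)) = arctan (√V / c) := by
  have hsum : √(1 + (√V / c) ^ 2) = √(V + c ^ 2) / c := by
    rw [div_pow, sq_sqrt hV, show 1 + V / c ^ 2 = (V + c ^ 2) / c ^ 2 by field_simp; ring,
      sqrt_div' _ (sq_nonneg c), sqrt_sq hc.le]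
  rw [arctan_eq_arccos (by positivity), hsum, inv_div]

theorem one_div_sqrt_mul_arccos_div_sqrt_add_sq {c V : ℝ} (hc : 0 < c) (hV : 0 < V) :
    1 / √V * arccos (c / √(V + c ^ 2)) = arctan (√V / c) / (√V / c) / c := by
  have : √V ≠ 0 := (sqrt_pos.mpr hV).ne'
  rw [arccos_div_sqrt_add_sq hc hV.le]
  field_simp

/-- Monotonicity and bound for the DB-QSP step duration: for fixed `c > 0`,
the function `f(V) = (1/√V)·arccos(c/√(V + c²))` is monotone non-increasing on `(0,∞)`
and satisfies `f(V) ≤ 1/c` for all `V > 0`. -/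
theorem stepDuration_antitone_and_bounded (c : ℝ) (hc : 0 < c) :
    AntitoneOn (fun V : ℝ => (1 / Real.sqrt V) * Real.arccos (c / Real.sqrt (V + c ^ 2)))
      (Set.Ioi (0 : ℝ)) ∧
    ∀ V : ℝ, 0 < V →
      (1 / Real.sqrt V) * Real.arccos (c / Real.sqrt (V + c ^ 2)) ≤ 1 / c := by
  have hpos {V : ℝ} (hV : 0 < V) : 0 < √V / c := div_pos (sqrt_pos.mpr hV) hc
  refine ⟨fun a ha b hb hab => ?_, fun V hV => ?_⟩
  · simp only [one_div_sqrt_mul_arccos_div_sqrt_add_sq hc ha,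
      one_div_sqrt_mul_arccos_div_sqrt_add_sq hc hb]
    gcongr ?_ / c
    exact antitoneOn_arctan_div_self (hpos ha) (hpos hb) (by gcongr)
  · rw [one_div_sqrt_mul_arccos_div_sqrt_add_sq hc hV]
    gcongr ?_ / c
    exact div_le_one_of_le₀ (arctan_le_self (hpos hV).le) (hpos hV).le
end
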